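/- arXiv:2303.12928 — 5 statements merged into one kernel-verified Lean document; each statement's English description precedes it below -/
import Mathlib

section
/- For every i ∈ {1, …, N} and every s in the open interval (T_{i−1}, T_i), the closed-form matrix function P satisfies the Riccati ODE: P has derivative P′(s) = −P(s) B_i R_i^{−1} B_i^T P(s) at s; moreover P(0) = Q_f. -/
/-!
On the `i`-th piece, `P` is the inverse of the affine matrix path
`M σ = A + (σ - T_{i-1}) • W_i` with `A = Q_f⁻¹ + ∑_{j<i} t_j W_j` positive definite and
`W_i = B_i R_i⁻¹ B_iᵀ` positive semidefinite. Hence `M σ` stays invertible for `σ ≥ T_{i-1}`, and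
the derivative of inversion, `(M⁻¹)' = -M⁻¹ M' M⁻¹` with `M' = W_i`, is the Riccati equation.
-/

open Matrix

section MatrixCalculus

-- The statements below use the product topology on matrices; a (complete) normed algebra
-- structure inducing it is needed only to differentiate `Ring.inverse`.
attribute [local instance] Matrix.linftyOpNormedRing Matrix.linftyOpNormedAlgebra

variable {𝕜 ι : Type*} [RCLike 𝕜] [Fintype ι] [DecidableEq ι]
  {M : 𝕜 → Matrix ι ι 𝕜} {M' : Matrix ι ι 𝕜} {s : 𝕜}

theorem HasDerivAt.matrix_apply (hM : HasDerivAt M M' s) (k l : ι) :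
    HasDerivAt (fun σ => M σ k l) (M' k l) s :=
  (LinearMap.toContinuousLinearMap (entryLinearMap 𝕜 𝕜 k l)).hasFDerivAt.comp_hasDerivAt s hM

theorem HasDerivAt.matrix_inv (hM : HasDerivAt M M' s) (hs : IsUnit (M s)) :
    HasDerivAt (fun σ => (M σ)⁻¹) (-((M s)⁻¹ * M' * (M s)⁻¹)) s := by
  have hinv := hasFDerivAt_ringInverse (𝕜 := 𝕜) hs.unit
  rw [hs.unit_spec] at hinv
  have h := hinv.comp_hasDerivAt s hM
  simp only [Function.comp_def, ← nonsing_inv_eq_ringInverse, coe_units_inv, hs.unit_spec] at h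
  exact h

theorem hasDerivAt_inv_add_smul_apply (A W : Matrix ι ι 𝕜) (c : 𝕜)
    (hs : IsUnit (A + (s - c) • W)) (k l : ι) :
    HasDerivAt (fun σ => (A + (σ - c) • W)⁻¹ k l)
      (-((A + (s - c) • W)⁻¹ * W * (A + (s - c) • W)⁻¹) k l) s := by
  have hM : HasDerivAt (fun σ => A + (σ - c) • W) W s := by
    have h := (((hasDerivAt_id s).sub_const c).smul_const W).const_add A
    rw [one_smul] at h
    exact h
  exact (hM.matrix_inv hs).matrix_apply k l

end MatrixCalculus

theorem Matrix.PosDef.posSemidef_mul_inv_mul_transpose {m n : Type*} [Fintype m] [DecidableEq m]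
    [Fintype n] {R : Matrix m m ℝ} (hR : R.PosDef) (B : Matrix n m ℝ) :
    (B * R⁻¹ * Bᵀ).PosSemidef := by
  simpa [conjTranspose_eq_transpose_of_trivial] using hR.inv.posSemidef.mul_mul_conjTranspose_same B

theorem Matrix.PosDef.add_sum_smul {n α : Type*} [Fintype n] {Q : Matrix n n ℝ} (hQ : Q.PosDef)
    {S : Finset α} {c : α → ℝ} {W : α → Matrix n n ℝ} (hc : ∀ j ∈ S, 0 ≤ c j)
    (hW : ∀ j ∈ S, (W j).PosSemidef) : (Q + ∑ j ∈ S, c j • W j).PosDef :=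
  hQ.add_posSemidef (posSemidef_sum S fun j hj => (hW j hj).smul (hc j hj))

theorem stmt_1_general (n m N : ℕ)
    (t : ℕ → ℝ) (ht : ∀ i ∈ Finset.Icc 1 N, 0 < t i)
    (B : ℕ → Matrix (Fin n) (Fin m) ℝ)
    (R : ℕ → Matrix (Fin m) (Fin m) ℝ) (hR : ∀ i ∈ Finset.Icc 1 N, (R i).PosDef)
    (Qf : Matrix (Fin n) (Fin n) ℝ) (hQf : Qf.PosDef)
    (T : ℕ → ℝ) (hT : ∀ i, T i = ∑ j ∈ Finset.Icc 1 i, t j)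
    (P : ℕ → ℝ → Matrix (Fin n) (Fin n) ℝ)
    (hP : ∀ i s, P i s
      = (Qf⁻¹ + ∑ j ∈ Finset.Icc 1 (i - 1), t j • (B j * (R j)⁻¹ * (B j)ᵀ)
          + (s - T (i - 1)) • (B i * (R i)⁻¹ * (B i)ᵀ))⁻¹) :
    (∀ i ∈ Finset.Icc 1 N, ∀ s ∈ Set.Ioo (T (i - 1)) (T i), ∀ k l : Fin n,
        HasDerivAt (fun σ => P i σ k l)
          ((-(P i s * (B i * (R i)⁻¹ * (B i)ᵀ) * P i s)) k l) s) ∧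
      P 1 0 = Qf := by
  have hgram : ∀ j ∈ Finset.Icc 1 N, (B j * (R j)⁻¹ * (B j)ᵀ).PosSemidef := fun j hj =>
    (hR j hj).posSemidef_mul_inv_mul_transpose (B j)
  refine ⟨fun i hi s hs k l => ?_, ?_⟩
  · have hprev : ∀ j ∈ Finset.Icc 1 (i - 1), j ∈ Finset.Icc 1 N := fun j hj => by
      simp only [Finset.mem_Icc] at hi hj ⊢; omega
    have hpos := ((hQf.inv.add_sum_smul (fun j hj => (ht j (hprev j hj)).le)
      (fun j hj => hgram j (hprev j hj))).add_posSemidef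
      ((hgram i hi).smul (sub_nonneg.mpr hs.1.le)))
    rw [show P i = _ from funext (hP i)]
    exact hasDerivAt_inv_add_smul_apply _ _ _ hpos.isUnit k l
  · have hT0 : T 0 = 0 := by simp [hT]
    rw [hP]
    simp [hT0, nonsing_inv_nonsing_inv Qf ((isUnit_iff_isUnit_det Qf).mp hQf.isUnit)]

/-- For every `i ∈ {1, …, N}` and every `s ∈ (T_{i-1}, T_i)`, the closed-form
matrix function `P` (on the `i`-th piece) satisfies the Riccati ODE
`P′(s) = -P(s) B_i R_i⁻¹ B_iᵀ P(s)` (entrywise derivative); moreover `P(0) = Q_f`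
(the value of the first piece `i = 1` at `s = T_0 = 0`). -/
theorem stmt_1 (n m N : ℕ) (hn : 1 ≤ n) (hm : 1 ≤ m) (hN : 1 ≤ N)
    (t : ℕ → ℝ) (ht : ∀ i ∈ Finset.Icc 1 N, 0 < t i)
    (B : ℕ → Matrix (Fin n) (Fin m) ℝ)
    (R : ℕ → Matrix (Fin m) (Fin m) ℝ) (hR : ∀ i ∈ Finset.Icc 1 N, (R i).PosDef)
    (a : ℕ → Fin m → ℝ)
    (Qf : Matrix (Fin n) (Fin n) ℝ) (hQf : Qf.PosDef) (b : Fin n → ℝ)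
    (T : ℕ → ℝ) (hT : ∀ i, T i = ∑ j ∈ Finset.Icc 1 i, t j)
    (P : ℕ → ℝ → Matrix (Fin n) (Fin n) ℝ)
    (hP : ∀ i s, P i s
      = (Qf⁻¹ + ∑ j ∈ Finset.Icc 1 (i - 1), t j • (B j * (R j)⁻¹ * (B j)ᵀ)
          + (s - T (i - 1)) • (B i * (R i)⁻¹ * (B i)ᵀ))⁻¹) :
    (∀ i ∈ Finset.Icc 1 N, ∀ s ∈ Set.Ioo (T (i - 1)) (T i), ∀ k l : Fin n,
        HasDerivAt (fun σ => P i σ k l)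
          ((-(P i s * (B i * (R i)⁻¹ * (B i)ᵀ) * P i s)) k l) s) ∧
      P 1 0 = Qf :=
  stmt_1_general n m N t ht B R hR Qf hQf T hT P hP
end

section
/- For every i ∈ {1, …, N} and every s in the open interval (T_{i−1}, T_i), the closed-form vector function q satisfies the linear ODE: q has derivative q′(s) = −P(s) B_i R_i^{−1} (B_i^T q(s) − a_i) at s; moreover q(0) = b. -/
/-!
On the `i`-th piece, `P(s)⁻¹ = M(s) := A + (s - T_{i-1}) D` and `P(s)⁻¹ q(s) = u + (s - T_{i-1}) w`
with `D = B_i R_i⁻¹ B_iᵀ`, `w = B_i R_i⁻¹ a_i` and `A`, `u` independent of `s`. For such an affine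
pencil `M(σ) (q(σ) - q(s)) = (σ - s) (w - D q(s))`, so the difference quotient of `q` is
`M(σ)⁻¹ (w - D q(s))`, which tends to `P(s) (w - D q(s))` by continuity of the matrix inverse.
`M(s)` is invertible because it is positive definite.
-/

open Matrix Filter Topology

namespace Matrix

variable {ι : Type*} [Fintype ι]

theorem PosDef.posSemidef_mul_inv_mul_transpose_s2 {κ : Type*} [Fintype κ] [DecidableEq κ]
    {R : Matrix κ κ ℝ} (hR : R.PosDef) (B : Matrix ι κ ℝ) : (B * R⁻¹ * Bᵀ).PosSemidef := by
  simpa using hR.inv.posSemidef.mul_mul_conjTranspose_same B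

variable [DecidableEq ι]

theorem inv_add_smul_mulVec_sub {A D : Matrix ι ι ℝ} {u w x : ι → ℝ} {s σ : ℝ}
    (hσ : IsUnit (A + σ • D).det) (hx : (A + s • D) *ᵥ x = u + s • w) :
    (A + σ • D)⁻¹ *ᵥ (u + σ • w) - x = (σ - s) • ((A + σ • D)⁻¹ *ᵥ (w - D *ᵥ x)) := by
  have hres : u + σ • w - (A + σ • D) *ᵥ x = (σ - s) • (w - D *ᵥ x) := by
    rw [add_mulVec, smul_mulVec] at hx ⊢
    linear_combination (norm := module) -hx
  rw [← mulVec_smul, ← hres, mulVec_sub, mulVec_mulVec, nonsing_inv_mul _ hσ, one_mulVec]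

theorem hasDerivAt_inv_add_smul_mulVec {A D : Matrix ι ι ℝ} {u w : ι → ℝ} {s : ℝ}
    (hs : IsUnit (A + s • D).det) :
    HasDerivAt (fun σ => (A + σ • D)⁻¹ *ᵥ (u + σ • w))
      ((A + s • D)⁻¹ *ᵥ (w - D *ᵥ ((A + s • D)⁻¹ *ᵥ (u + s • w)))) s := by
  set x := (A + s • D)⁻¹ *ᵥ (u + s • w)
  have hpencil : Continuous fun σ : ℝ => A + σ • D := by fun_prop
  have hinv : ContinuousAt (fun σ : ℝ => (A + σ • D)⁻¹) s :=
    (continuousAt_matrix_inv _ (NormedRing.inverse_continuousAt hs.unit)).comp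
      (f := fun σ : ℝ => A + σ • D) hpencil.continuousAt
  have hunit : ∀ᶠ σ in 𝓝 s, IsUnit (A + σ • D).det := by
    simp only [isUnit_iff_ne_zero] at hs ⊢
    exact hpencil.matrix_det.continuousAt.eventually_ne hs
  have hx : (A + s • D) *ᵥ x = u + s • w := by
    rw [mulVec_mulVec, mul_nonsing_inv _ hs, one_mulVec]
  have hmulVec : Continuous fun M : Matrix ι ι ℝ => M *ᵥ (w - D *ᵥ x) :=
    continuous_id.matrix_mulVec continuous_const
  rw [hasDerivAt_iff_tendsto_slope]
  refine Tendsto.congr' ?_ (tendsto_nhdsWithin_of_tendsto_nhds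
    ((hmulVec.tendsto _).comp hinv.tendsto))
  filter_upwards [nhdsWithin_le_nhds hunit, self_mem_nhdsWithin] with σ hσ hne
  rw [slope_def_module, inv_add_smul_mulVec_sub hσ hx, smul_smul,
    inv_mul_cancel₀ (sub_ne_zero.mpr hne), one_smul]
  rfl

end Matrix

theorem stmt_2_general (n m N : ℕ)
    (t : ℕ → ℝ) (ht : ∀ i ∈ Finset.Icc 1 N, 0 < t i)
    (B : ℕ → Matrix (Fin n) (Fin m) ℝ)
    (R : ℕ → Matrix (Fin m) (Fin m) ℝ) (hR : ∀ i ∈ Finset.Icc 1 N, (R i).PosDef)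
    (a : ℕ → Fin m → ℝ)
    (Qf : Matrix (Fin n) (Fin n) ℝ) (hQf : Qf.PosDef) (b : Fin n → ℝ)
    (T : ℕ → ℝ) (hT : ∀ i, T i = ∑ j ∈ Finset.Icc 1 i, t j)
    (P : ℕ → ℝ → Matrix (Fin n) (Fin n) ℝ)
    (hP : ∀ i s, P i s
      = (Qf⁻¹ + ∑ j ∈ Finset.Icc 1 (i - 1), t j • (B j * (R j)⁻¹ * (B j)ᵀ)
          + (s - T (i - 1)) • (B i * (R i)⁻¹ * (B i)ᵀ))⁻¹)
    (q : ℕ → ℝ → (Fin n → ℝ))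
    (hq : ∀ i s, q i s
      = P i s *ᵥ (Qf⁻¹ *ᵥ b + ∑ j ∈ Finset.Icc 1 (i - 1), t j • ((B j * (R j)⁻¹) *ᵥ a j)
          + (s - T (i - 1)) • ((B i * (R i)⁻¹) *ᵥ a i))) :
    (∀ i ∈ Finset.Icc 1 N, ∀ s ∈ Set.Ioo (T (i - 1)) (T i), ∀ k : Fin n,
        HasDerivAt (fun σ => q i σ k)
          ((-(P i s * (B i * (R i)⁻¹)) *ᵥ ((B i)ᵀ *ᵥ q i s - a i)) k) s) ∧
      q 1 0 = b := by
  refine ⟨fun i hi s hs k => ?_, ?_⟩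
  · have hle : ∀ j ∈ Finset.Icc 1 (i - 1), j ∈ Finset.Icc 1 N := fun j hj => by
      simp only [Finset.mem_Icc] at hi hj ⊢; omega
    have hA : (Qf⁻¹ + ∑ j ∈ Finset.Icc 1 (i - 1), t j • (B j * (R j)⁻¹ * (B j)ᵀ)).PosDef :=
      hQf.inv.add_posSemidef <| posSemidef_sum _ fun j hj =>
        ((hR j (hle j hj)).posSemidef_mul_inv_mul_transpose_s2 _).smul (ht j (hle j hj)).le
    have hunit := (isUnit_iff_isUnit_det _).1 <|
      (hA.add_posSemidef <| ((hR i hi).posSemidef_mul_inv_mul_transpose_s2 (B i)).smul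
        (sub_nonneg.2 hs.1.le)).isUnit
    have hderiv := (hasDerivAt_inv_add_smul_mulVec hunit
      (u := Qf⁻¹ *ᵥ b + ∑ j ∈ Finset.Icc 1 (i - 1), t j • ((B j * (R j)⁻¹) *ᵥ a j))
      (w := (B i * (R i)⁻¹) *ᵥ a i)).comp_sub_const s (T (i - 1))
    simp only [← hP, ← hq] at hderiv
    rw [neg_mulVec, ← mulVec_mulVec, mulVec_sub, mulVec_mulVec, ← mulVec_neg, neg_sub]
    exact hasDerivAt_pi.1 hderiv k
  · have hT0 : T 0 = 0 := by simp [hT]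
    have hQf_unit : IsUnit Qf.det := (isUnit_iff_isUnit_det _).1 hQf.isUnit
    simp [hq, hP, hT0, nonsing_inv_nonsing_inv _ hQf_unit, mulVec_mulVec,
      mul_nonsing_inv _ hQf_unit]

/-- For every `i ∈ {1, …, N}` and every `s ∈ (T_{i-1}, T_i)`, the closed-form
vector function `q` (on the `i`-th piece) satisfies the linear ODE
`q′(s) = -P(s) B_i R_i⁻¹ (B_iᵀ q(s) - a_i)` (entrywise derivative); moreover `q(0) = b`
(the value of the first piece `i = 1` at `s = T_0 = 0`). -/
theorem stmt_2 (n m N : ℕ) (hn : 1 ≤ n) (hm : 1 ≤ m) (hN : 1 ≤ N)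
    (t : ℕ → ℝ) (ht : ∀ i ∈ Finset.Icc 1 N, 0 < t i)
    (B : ℕ → Matrix (Fin n) (Fin m) ℝ)
    (R : ℕ → Matrix (Fin m) (Fin m) ℝ) (hR : ∀ i ∈ Finset.Icc 1 N, (R i).PosDef)
    (a : ℕ → Fin m → ℝ)
    (Qf : Matrix (Fin n) (Fin n) ℝ) (hQf : Qf.PosDef) (b : Fin n → ℝ)
    (T : ℕ → ℝ) (hT : ∀ i, T i = ∑ j ∈ Finset.Icc 1 i, t j)
    (P : ℕ → ℝ → Matrix (Fin n) (Fin n) ℝ)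
    (hP : ∀ i s, P i s
      = (Qf⁻¹ + ∑ j ∈ Finset.Icc 1 (i - 1), t j • (B j * (R j)⁻¹ * (B j)ᵀ)
          + (s - T (i - 1)) • (B i * (R i)⁻¹ * (B i)ᵀ))⁻¹)
    (q : ℕ → ℝ → (Fin n → ℝ))
    (hq : ∀ i s, q i s
      = P i s *ᵥ (Qf⁻¹ *ᵥ b + ∑ j ∈ Finset.Icc 1 (i - 1), t j • ((B j * (R j)⁻¹) *ᵥ a j)
          + (s - T (i - 1)) • ((B i * (R i)⁻¹) *ᵥ a i))) :
    (∀ i ∈ Finset.Icc 1 N, ∀ s ∈ Set.Ioo (T (i - 1)) (T i), ∀ k : Fin n,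
        HasDerivAt (fun σ => q i σ k)
          ((-(P i s * (B i * (R i)⁻¹)) *ᵥ ((B i)ᵀ *ᵥ q i s - a i)) k) s) ∧
      q 1 0 = b :=
  stmt_2_general n m N t ht B R hR a Qf hQf b T hT P hP q hq
end

section
/- Let I ⊆ ℝ be an open interval, M ∈ ℝ^{n×n}, w ∈ ℝ^n, and let P : ℝ → ℝ^{n×n} and q : ℝ → ℝ^n be such that P(s) is invertible for every s ∈ I, P has derivative P′(s) = −P(s) M P(s) at every s ∈ I, and q has derivative q′(s) = −P(s) M q(s) + P(s) w at every s ∈ I. Then the function s ↦ P(s)^{−1} q(s) has constant derivative w at every s ∈ I. -/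
open Matrix

/-! Write `B = P⁻¹`. Differentiating the inverse gives `B' = -B P' B = B (P M P) B = M`, so
`(B q)' = M q + B (-P M q + P w) = M q - M q + w = w`. -/

section MatrixCalculus

variable {𝕜 : Type*} [NontriviallyNormedField 𝕜] {m n : Type*} [Fintype n]

theorem hasDerivAt_matrix {F : Type*} [NormedAddCommGroup F] [NormedSpace 𝕜 F]
    {A : 𝕜 → Matrix m n F} {A' : Matrix m n F} {x : 𝕜} :
    HasDerivAt A A' x ↔ ∀ i j, HasDerivAt (fun σ => A σ i j) (A' i j) x :=
  (hasDerivAt_pi (φ := fun σ i => A σ i)).trans (forall_congr' fun _ => hasDerivAt_pi)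

theorem HasDerivAt.mulVec [Fintype m] {A : 𝕜 → Matrix m n 𝕜} {A' : Matrix m n 𝕜}
    {v : 𝕜 → n → 𝕜} {v' : n → 𝕜} {x : 𝕜} (hA : HasDerivAt A A' x) (hv : HasDerivAt v v' x) :
    HasDerivAt (fun σ => A σ *ᵥ v σ) (A' *ᵥ v x + A x *ᵥ v') x := by
  refine hasDerivAt_pi.2 fun i => ?_
  have hsum := HasDerivAt.fun_sum (u := Finset.univ)
    fun j _ => (hasDerivAt_matrix.1 hA i j).fun_mul (hasDerivAt_pi.1 hv j)
  rwa [Finset.sum_add_distrib] at hsum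

-- The derivative is taken in the `L∞` operator norm, where `Ring.inverse` is differentiable;
-- `HasDerivAt` depends only on the topology, which every matrix norm induces.
open scoped Matrix.Norms.Operator in
theorem HasDerivAt.matrix_inv_s4 [DecidableEq n] [CompleteSpace 𝕜]
    {A : 𝕜 → Matrix n n 𝕜} {A' : Matrix n n 𝕜} {x : 𝕜} (hA : HasDerivAt A A' x)
    (hdet : IsUnit (A x).det) :
    HasDerivAt (fun σ => (A σ)⁻¹) (-((A x)⁻¹ * A' * (A x)⁻¹)) x := by
  have : HasSummableGeomSeries (Matrix n n 𝕜) :=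
    @instHasSummableGeomSeriesOfCompleteSpace _ _ (FiniteDimensional.complete 𝕜 _)
  have hinv := (hasFDerivAt_ringInverse (𝕜 := 𝕜)
    ((A x).isUnit_iff_isUnit_det.2 hdet).unit).comp_hasDerivAt x hA
  simp only [← Ring.inverse_unit, IsUnit.unit_spec] at hinv
  simp only [nonsing_inv_eq_ringInverse]
  exact hinv

end MatrixCalculus

theorem stmt_4_general (n : ℕ)
    (I : Set ℝ)
    (M : Matrix (Fin n) (Fin n) ℝ) (w : Fin n → ℝ)
    (P : ℝ → Matrix (Fin n) (Fin n) ℝ) (q : ℝ → (Fin n → ℝ))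
    (hinv : ∀ s ∈ I, IsUnit (P s).det)
    (hP : ∀ s ∈ I, ∀ k l : Fin n,
      HasDerivAt (fun σ => P σ k l) ((-(P s * M * P s)) k l) s)
    (hq : ∀ s ∈ I, ∀ k : Fin n,
      HasDerivAt (fun σ => q σ k) ((-(P s * M) *ᵥ q s + P s *ᵥ w) k) s) :
    ∀ s ∈ I, ∀ k : Fin n, HasDerivAt (fun σ => ((P σ)⁻¹ *ᵥ q σ) k) (w k) s := by
  intro s hs k
  have hleft : (P s)⁻¹ * P s = 1 := nonsing_inv_mul _ (hinv s hs)
  have hright : P s * (P s)⁻¹ = 1 := mul_nonsing_inv _ (hinv s hs)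
  have hB : HasDerivAt (fun σ => (P σ)⁻¹) M s := by
    convert (hasDerivAt_matrix.2 (hP s hs)).matrix_inv_s4 (hinv s hs) using 1
    simp only [neg_mul, mul_neg, neg_neg, Matrix.mul_assoc, hright, Matrix.mul_one]
    simp only [← Matrix.mul_assoc, hleft, Matrix.one_mul]
  have hBq := hB.mulVec (hasDerivAt_pi.2 (hq s hs))
  rw [mulVec_add, mulVec_mulVec, mulVec_mulVec, Matrix.mul_neg, neg_mulVec, ← Matrix.mul_assoc,
    hleft, Matrix.one_mul, ← add_assoc, add_neg_cancel, zero_add, one_mulVec] at hBq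
  exact hasDerivAt_pi.1 hBq k

/-- Let `I ⊆ ℝ` be an open interval, `M ∈ ℝ^{n×n}`, `w ∈ ℝ^n`, and let
`P : ℝ → ℝ^{n×n}`, `q : ℝ → ℝ^n` be such that `P(s)` is invertible for every `s ∈ I`,
`P′(s) = -P(s) M P(s)` and `q′(s) = -P(s) M q(s) + P(s) w` (entrywise derivatives) at every
`s ∈ I`. Then `s ↦ P(s)⁻¹ q(s)` has constant derivative `w` at every `s ∈ I`. -/
theorem stmt_4 (n : ℕ) (hn : 1 ≤ n)
    (I : Set ℝ) (hIopen : IsOpen I) (hIinterval : I.OrdConnected)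
    (M : Matrix (Fin n) (Fin n) ℝ) (w : Fin n → ℝ)
    (P : ℝ → Matrix (Fin n) (Fin n) ℝ) (q : ℝ → (Fin n → ℝ))
    (hinv : ∀ s ∈ I, IsUnit (P s).det)
    (hP : ∀ s ∈ I, ∀ k l : Fin n,
      HasDerivAt (fun σ => P σ k l) ((-(P s * M * P s)) k l) s)
    (hq : ∀ s ∈ I, ∀ k : Fin n,
      HasDerivAt (fun σ => q σ k) ((-(P s * M) *ᵥ q s + P s *ᵥ w) k) s) :
    ∀ s ∈ I, ∀ k : Fin n, HasDerivAt (fun σ => ((P σ)⁻¹ *ᵥ q σ) k) (w k) s :=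
  stmt_4_general n I M w P q hinv hP hq
end

section
/- For every i ∈ {1, …, N}, the closed-form vector function q satisfies the recursive least squares update q(T_i) = q(T_{i−1}) + t_i P(T_i) B_i R_i^{−1} a_i − t_i P(T_{i−1}) B_i (R_i + t_i B_i^T P(T_{i−1}) B_i)^{−1} B_i^T q(T_{i−1}), where R_i + t_i B_i^T P(T_{i−1}) B_i is symmetric positive definite (hence invertible). -/
open Matrix

/-
Put `M := P(T_{i-1})⁻¹ = Q_f⁻¹ + Σ_{j<i} t_j B_j R_j⁻¹ B_jᵀ`, positive definite, and
`c := Q_f⁻¹ b + Σ_{j<i} t_j B_j R_j⁻¹ a_j`. Then `q(T_{i-1}) = M⁻¹ c`,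
`P(T_i) = (M + t_i B_i R_i⁻¹ B_iᵀ)⁻¹` and `q(T_i) = P(T_i) (c + t_i B_i R_i⁻¹ a_i)`. The Woodbury
identity expands `P(T_i) c` as `M⁻¹ c - t_i M⁻¹ B_i S⁻¹ B_iᵀ M⁻¹ c` with
`S = R_i + t_i B_iᵀ M⁻¹ B_i`, which is positive definite as the sum of `R_i` and a positive
semidefinite matrix.
-/

section Woodbury

variable {ι κ K : Type*} [Fintype ι] [DecidableEq ι] [Fintype κ] [DecidableEq κ] [Field K]

theorem Matrix.inv_smul_of_ne_zero {A : Matrix κ κ K} (hA : IsUnit A) {t : K} (ht : t ≠ 0) :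
    (t • A)⁻¹ = t⁻¹ • A⁻¹ :=
  A.inv_smul' (Units.mk0 t ht) ((isUnit_iff_isUnit_det A).mp hA)

theorem Matrix.inv_add_smul_mul_inv_mul {A : Matrix ι ι K} {R : Matrix κ κ K} {t : K}
    (U : Matrix ι κ K) (V : Matrix κ ι K)
    (hA : IsUnit A) (hR : IsUnit R) (hS : IsUnit (R + t • (V * A⁻¹ * U))) :
    (A + t • (U * R⁻¹ * V))⁻¹
      = A⁻¹ - t • (A⁻¹ * U * (R + t • (V * A⁻¹ * U))⁻¹ * V * A⁻¹) := by
  rcases eq_or_ne t 0 with rfl | ht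
  · simp
  set S := R + t • (V * A⁻¹ * U)
  have hR' : IsUnit R⁻¹ := isUnit_nonsing_inv_iff.mpr hR
  have hCS : (t • R⁻¹)⁻¹ + V * A⁻¹ * U = t⁻¹ • S := by
    rw [inv_smul_of_ne_zero hR' ht, nonsing_inv_nonsing_inv R ((isUnit_iff_isUnit_det R).mp hR),
      smul_add, smul_smul, inv_mul_cancel₀ ht, one_smul]
  have hCS_unit : IsUnit ((t • R⁻¹)⁻¹ + V * A⁻¹ * U) := by
    rw [hCS]
    exact hS.smul (Units.mk0 t⁻¹ (inv_ne_zero ht))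
  have h := add_mul_mul_inv_eq_sub A U (t • R⁻¹) V hA (hR'.smul (Units.mk0 t ht)) hCS_unit
  rw [hCS, inv_smul_of_ne_zero hS (inv_ne_zero ht), inv_inv] at h
  simpa only [Matrix.mul_smul, Matrix.smul_mul] using h

theorem Matrix.inv_add_smul_mul_inv_mul_mulVec {A : Matrix ι ι K} {R : Matrix κ κ K} {t : K}
    (U : Matrix ι κ K) (V : Matrix κ ι K)
    (hA : IsUnit A) (hR : IsUnit R) (hS : IsUnit (R + t • (V * A⁻¹ * U))) (c : ι → K) (a : κ → K) :
    (A + t • (U * R⁻¹ * V))⁻¹ *ᵥ (c + t • ((U * R⁻¹) *ᵥ a))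
      = A⁻¹ *ᵥ c + t • (((A + t • (U * R⁻¹ * V))⁻¹ * (U * R⁻¹)) *ᵥ a)
        - t • ((A⁻¹ * U * (R + t • (V * A⁻¹ * U))⁻¹ * V) *ᵥ (A⁻¹ *ᵥ c)) := by
  rw [mulVec_add, mulVec_smul, mulVec_mulVec, inv_add_smul_mul_inv_mul U V hA hR hS, sub_mulVec,
    smul_mulVec, mulVec_mulVec]
  abel

end Woodbury

theorem Matrix.PosDef.add_smul_transpose_mul_mul {ι κ : Type*} [Fintype ι] [Fintype κ]
    {R : Matrix κ κ ℝ} (hR : R.PosDef) {M : Matrix ι ι ℝ} (hM : M.PosSemidef) (B : Matrix ι κ ℝ)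
    {t : ℝ} (ht : 0 ≤ t) : (R + t • (Bᵀ * M * B)).PosDef :=
  hR.add_posSemidef ((hM.conjTranspose_mul_mul_same B).smul ht)

theorem stmt_8_general (n m N : ℕ)
    (t : ℕ → ℝ) (ht : ∀ i ∈ Finset.Icc 1 N, 0 < t i)
    (B : ℕ → Matrix (Fin n) (Fin m) ℝ)
    (R : ℕ → Matrix (Fin m) (Fin m) ℝ) (hR : ∀ i ∈ Finset.Icc 1 N, (R i).PosDef)
    (a : ℕ → Fin m → ℝ)
    (Qf : Matrix (Fin n) (Fin n) ℝ) (hQf : Qf.PosDef) (b : Fin n → ℝ)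
    (T : ℕ → ℝ) (hT : ∀ i, T i = ∑ j ∈ Finset.Icc 1 i, t j)
    (P : ℕ → ℝ → Matrix (Fin n) (Fin n) ℝ)
    (hP : ∀ i s, P i s
      = (Qf⁻¹ + ∑ j ∈ Finset.Icc 1 (i - 1), t j • (B j * (R j)⁻¹ * (B j)ᵀ)
          + (s - T (i - 1)) • (B i * (R i)⁻¹ * (B i)ᵀ))⁻¹)
    (q : ℕ → ℝ → (Fin n → ℝ))
    (hq : ∀ i s, q i s
      = P i s *ᵥ (Qf⁻¹ *ᵥ b + ∑ j ∈ Finset.Icc 1 (i - 1), t j • ((B j * (R j)⁻¹) *ᵥ a j)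
          + (s - T (i - 1)) • ((B i * (R i)⁻¹) *ᵥ a i))) :
    ∀ i ∈ Finset.Icc 1 N,
      (R i + t i • ((B i)ᵀ * P i (T (i - 1)) * B i)).PosDef ∧
      q i (T i) = q i (T (i - 1))
        + t i • ((P i (T i) * (B i * (R i)⁻¹)) *ᵥ a i)
        - t i • ((P i (T (i - 1)) * B i
            * (R i + t i • ((B i)ᵀ * P i (T (i - 1)) * B i))⁻¹
            * (B i)ᵀ) *ᵥ q i (T (i - 1))) := by
  intro i hi
  have hsub : i - 1 + 1 = i := Nat.sub_add_cancel (Finset.mem_Icc.mp hi).1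
  set M := Qf⁻¹ + ∑ j ∈ Finset.Icc 1 (i - 1), t j • (B j * (R j)⁻¹ * (B j)ᵀ)
  set c := Qf⁻¹ *ᵥ b + ∑ j ∈ Finset.Icc 1 (i - 1), t j • ((B j * (R j)⁻¹) *ᵥ a j)
  have hM : M.PosDef := by
    refine hQf.inv.add_posSemidef (posSemidef_sum _ fun j hj => ?_)
    have hjN : j ∈ Finset.Icc 1 N := by simp only [Finset.mem_Icc] at hi hj ⊢; omega
    exact ((hR j hjN).inv.posSemidef.mul_mul_conjTranspose_same (B j)).smul (ht j hjN).le
  have hTi : T i = T (i - 1) + t i := by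
    have h := Finset.sum_Icc_succ_top (show 1 ≤ i - 1 + 1 by omega) t
    rwa [hsub, ← hT, ← hT] at h
  have hP₀ : P i (T (i - 1)) = M⁻¹ := by rw [hP, sub_self, zero_smul, add_zero]
  have hP₁ : P i (T i) = (M + t i • (B i * (R i)⁻¹ * (B i)ᵀ))⁻¹ := by
    rw [hP, hTi, add_sub_cancel_left]
  have hq₀ : q i (T (i - 1)) = M⁻¹ *ᵥ c := by rw [hq, hP₀, sub_self, zero_smul, add_zero]
  have hq₁ : q i (T i) = P i (T i) *ᵥ (c + t i • ((B i * (R i)⁻¹) *ᵥ a i)) := by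
    rw [hq, hTi, add_sub_cancel_left]
  have hS := (hR i hi).add_smul_transpose_mul_mul hM.inv.posSemidef (B i) (ht i hi).le
  rw [hq₁, hq₀, hP₀, hP₁]
  exact ⟨hS, inv_add_smul_mul_inv_mul_mulVec _ _ hM.isUnit (hR i hi).isUnit hS.isUnit c (a i)⟩

/-- For every `i ∈ {1, …, N}`, the closed-form vector function `q` satisfies the
recursive least squares update
`q(T_i) = q(T_{i-1}) + t_i P(T_i) B_i R_i⁻¹ a_i
  - t_i P(T_{i-1}) B_i (R_i + t_i B_iᵀ P(T_{i-1}) B_i)⁻¹ B_iᵀ q(T_{i-1})`,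
where `R_i + t_i B_iᵀ P(T_{i-1}) B_i` is symmetric positive definite (hence invertible).
Here `P i s`, `q i s` are the closed forms on the `i`-th piece. -/
theorem stmt_8 (n m N : ℕ) (hn : 1 ≤ n) (hm : 1 ≤ m) (hN : 1 ≤ N)
    (t : ℕ → ℝ) (ht : ∀ i ∈ Finset.Icc 1 N, 0 < t i)
    (B : ℕ → Matrix (Fin n) (Fin m) ℝ)
    (R : ℕ → Matrix (Fin m) (Fin m) ℝ) (hR : ∀ i ∈ Finset.Icc 1 N, (R i).PosDef)
    (a : ℕ → Fin m → ℝ)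
    (Qf : Matrix (Fin n) (Fin n) ℝ) (hQf : Qf.PosDef) (b : Fin n → ℝ)
    (T : ℕ → ℝ) (hT : ∀ i, T i = ∑ j ∈ Finset.Icc 1 i, t j)
    (P : ℕ → ℝ → Matrix (Fin n) (Fin n) ℝ)
    (hP : ∀ i s, P i s
      = (Qf⁻¹ + ∑ j ∈ Finset.Icc 1 (i - 1), t j • (B j * (R j)⁻¹ * (B j)ᵀ)
          + (s - T (i - 1)) • (B i * (R i)⁻¹ * (B i)ᵀ))⁻¹)
    (q : ℕ → ℝ → (Fin n → ℝ))
    (hq : ∀ i s, q i s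
      = P i s *ᵥ (Qf⁻¹ *ᵥ b + ∑ j ∈ Finset.Icc 1 (i - 1), t j • ((B j * (R j)⁻¹) *ᵥ a j)
          + (s - T (i - 1)) • ((B i * (R i)⁻¹) *ᵥ a i))) :
    ∀ i ∈ Finset.Icc 1 N,
      (R i + t i • ((B i)ᵀ * P i (T (i - 1)) * B i)).PosDef ∧
      q i (T i) = q i (T (i - 1))
        + t i • ((P i (T i) * (B i * (R i)⁻¹)) *ᵥ a i)
        - t i • ((P i (T (i - 1)) * B i
            * (R i + t i • ((B i)ᵀ * P i (T (i - 1)) * B i))⁻¹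
            * (B i)ᵀ) *ᵥ q i (T (i - 1))) :=
  stmt_8_general n m N t ht B R hR a Qf hQf b T hT P hP q hq
end

section
/- Suppose P : [0, ∞) → ℝ^{n×n}, q : [0, ∞) → ℝ^n, and c : [0, ∞) → ℝ are differentiable, P(t) is symmetric for every t, and they solve the Riccati ODE system: P′(t) = −P(t)^T C_pp P(t) + P(t)^T C_xp + C_xp^T P(t) + C_xx, q′(t) = −P(t)^T C_pp q(t) + C_xp^T q(t) − v_x + P(t)^T v_p, and c′(t) = −(1/2)⟨B^T q(t) − a_u, R^{−1}(B^T q(t) − a_u)⟩ for all t > 0, with P(0) = Q_f, q(0) = b, c(0) = 0. Define S(x, t) = (1/2)⟨x, P(t)x⟩ + ⟨q(t), x⟩ + c(t). Then for every x ∈ ℝ^n and t > 0, the gradient of S in x is ∇_x S(x, t) = P(t)x + q(t), the time derivative ∂S/∂t (x, t) satisfies ∂S/∂t (x, t) + H(x, P(t)x + q(t)) = 0, and S(x, 0) = (1/2)⟨x, Q_f x⟩ + ⟨b, x⟩, where H(x, p) = −⟨Ax, p⟩ − (1/2)⟨x, Qx⟩ + ⟨a_x, x⟩ + (1/2)⟨B^T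 p + N^T x − a_u, R^{−1}(B^T p + N^T x − a_u)⟩. In other words, S solves the Hamilton–Jacobi PDE ∂S/∂t + H(x, ∇_x S) = 0 with initial data (1/2)⟨x, Q_f x⟩ + ⟨b, x⟩. -/
/-!
`S(·, t)` is a quadratic form with symmetric matrix `P t` plus an affine part, so its gradient is
`P t x + q t`. Differentiating in `t` gives `½⟨x, P′x⟩ + ⟨q′, x⟩ + c′`; after substituting the
Riccati equations, the symmetry of `P t` and of `R⁻¹` lets every cross term be transposed into the
shape it has in the expansion of `H(x, P t x + q t)`, and the two sides agree term by term.
-/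

open Matrix
open scoped RealInnerProductSpace

theorem LinearMap.IsSymmetric.hasGradientAt_half_inner_add_inner
    {F : Type*} [NormedAddCommGroup F] [InnerProductSpace ℝ F] [CompleteSpace F]
    {T : F →L[ℝ] F} (hT : (T : F →ₗ[ℝ] F).IsSymmetric) (g : F) (c : ℝ) (x : F) :
    HasGradientAt (fun y => (1 / 2) * ⟪T y, y⟫ + ⟪g, y⟫ + c) (T x + g) x := by
  have hquad := (hT.hasStrictFDerivAt_reApplyInnerSelf x).hasFDerivAt.const_mul (1 / 2 : ℝ)
  refine hasGradientAt_iff_hasFDerivAt.2 <|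
    ((hquad.add (innerSL ℝ g).hasFDerivAt).add_const c).congr_fderiv ?_
  ext y
  simp

namespace Matrix

variable {ι κ : Type*} [Fintype ι] [Fintype κ]

theorem dotProduct_mulVec_eq_transpose {α : Type*} [CommSemiring α] (v : ι → α)
    (M : Matrix ι κ α) (w : κ → α) :
    v ⬝ᵥ (M *ᵥ w) = (Mᵀ *ᵥ v) ⬝ᵥ w := by
  rw [dotProduct_mulVec, mulVec_transpose]

theorem IsSymm.dotProduct_mulVec_comm {α : Type*} [CommSemiring α] {M : Matrix ι ι α}
    (hM : M.IsSymm) (u v : ι → α) :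
    u ⬝ᵥ (M *ᵥ v) = v ⬝ᵥ (M *ᵥ u) := by
  rw [dotProduct_mulVec_eq_transpose, hM.eq, dotProduct_comm]

theorem IsSymm.hasGradientAt_quadratic [DecidableEq ι] {M : Matrix ι ι ℝ} (hM : M.IsSymm)
    (g : ι → ℝ) (c : ℝ) (x : EuclideanSpace ℝ ι) :
    HasGradientAt
      (fun y : EuclideanSpace ℝ ι => (1 / 2) * (y.ofLp ⬝ᵥ (M *ᵥ y.ofLp)) + g ⬝ᵥ y.ofLp + c)
      (WithLp.toLp 2 (M *ᵥ x.ofLp + g)) x := by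
  have hT : (toEuclideanCLM (𝕜 := ℝ) M : EuclideanSpace ℝ ι →ₗ[ℝ] _).IsSymmetric := by
    rw [coe_toEuclideanCLM_eq_toEuclideanLin, isSymmetric_toEuclideanLin_iff,
      isHermitian_iff_isSymm]
    exact hM
  convert hT.hasGradientAt_half_inner_add_inner (WithLp.toLp 2 g) c x using 2 with y
  · rw [real_inner_comm, inner_toEuclideanCLM, EuclideanSpace.inner_eq_star_dotProduct,
      star_trivial, dotProduct_comm g]
  · rfl

theorem hasDerivAt_dotProduct_const {u : ℝ → ι → ℝ} {u' : ι → ℝ} {t : ℝ}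
    (hu : ∀ k, HasDerivAt (fun τ => u τ k) (u' k) t) (w : ι → ℝ) :
    HasDerivAt (fun τ => u τ ⬝ᵥ w) (u' ⬝ᵥ w) t :=
  HasDerivAt.fun_sum fun k _ => (hu k).mul_const (w k)

theorem hasDerivAt_dotProduct_mulVec {P : ℝ → Matrix ι κ ℝ} {P' : Matrix ι κ ℝ} {t : ℝ}
    (hP : ∀ k l, HasDerivAt (fun τ => P τ k l) (P' k l) t) (v : ι → ℝ) (w : κ → ℝ) :
    HasDerivAt (fun τ => v ⬝ᵥ (P τ *ᵥ w)) (v ⬝ᵥ (P' *ᵥ w)) t := by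
  have hrow : ∀ k, HasDerivAt (fun τ => (P τ *ᵥ w) k) ((P' *ᵥ w) k) t := fun k =>
    hasDerivAt_dotProduct_const (hP k) w
  simpa only [dotProduct_comm v] using hasDerivAt_dotProduct_const hrow v

end Matrix

section Riccati

variable {ι κ : Type*} [Fintype ι] [Fintype κ]

theorem riccati_rate_eq_neg_hamiltonian (A : Matrix ι ι ℝ) (B N : Matrix ι κ ℝ)
    (Q : Matrix ι ι ℝ) (K : Matrix κ κ ℝ) (hK : K.IsSymm)
    (au : κ → ℝ) (ax : ι → ℝ) (P : Matrix ι ι ℝ) (hP : P.IsSymm)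
    (q x : ι → ℝ) :
    (1 / 2) * (x ⬝ᵥ ((-(Pᵀ * (B * K * Bᵀ) * P) + Pᵀ * (A - B * K * Nᵀ)
        + (A - B * K * Nᵀ)ᵀ * P + (Q - N * K * Nᵀ)) *ᵥ x))
      + (-((Pᵀ * (B * K * Bᵀ)) *ᵥ q) + (A - B * K * Nᵀ)ᵀ *ᵥ q
          - (ax - N *ᵥ (K *ᵥ au)) + Pᵀ *ᵥ (B *ᵥ (K *ᵥ au))) ⬝ᵥ x
      + (-(1 / 2) * ((Bᵀ *ᵥ q - au) ⬝ᵥ (K *ᵥ (Bᵀ *ᵥ q - au))))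
    = -(-((A *ᵥ x) ⬝ᵥ (P *ᵥ x + q)) - (1 / 2) * (x ⬝ᵥ (Q *ᵥ x)) + ax ⬝ᵥ x
        + (1 / 2) * ((Bᵀ *ᵥ (P *ᵥ x + q) + Nᵀ *ᵥ x - au)
            ⬝ᵥ (K *ᵥ (Bᵀ *ᵥ (P *ᵥ x + q) + Nᵀ *ᵥ x - au)))) := by
  simp only [hP.eq, hK.eq, transpose_sub, transpose_mul, transpose_transpose,
    add_mulVec, sub_mulVec, neg_mulVec, ← mulVec_mulVec, mulVec_add, mulVec_sub,
    dotProduct_add, dotProduct_sub, dotProduct_neg, add_dotProduct, sub_dotProduct, neg_dotProduct]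
  -- Transposing brings every term to `⟪Ax, Px⟫`, `⟪Ax, q⟫` or `⟪u, K v⟫` with
  -- `u, v ∈ {BᵀPx, Nᵀx, Bᵀq, au}`; in these atoms the identity is linear.
  linarith [hK.dotProduct_mulVec_comm (Bᵀ *ᵥ q) (Bᵀ *ᵥ P *ᵥ x),
    hK.dotProduct_mulVec_comm (Bᵀ *ᵥ q) (Nᵀ *ᵥ x), hK.dotProduct_mulVec_comm au (Bᵀ *ᵥ P *ᵥ x),
    hK.dotProduct_mulVec_comm au (Nᵀ *ᵥ x), hK.dotProduct_mulVec_comm au (Bᵀ *ᵥ q),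
    (by rw [dotProduct_mulVec_eq_transpose, hP.eq, dotProduct_comm] :
      x ⬝ᵥ P *ᵥ A *ᵥ x = A *ᵥ x ⬝ᵥ P *ᵥ x),
    (by rw [dotProduct_mulVec_eq_transpose, transpose_transpose] :
      x ⬝ᵥ Aᵀ *ᵥ P *ᵥ x = A *ᵥ x ⬝ᵥ P *ᵥ x),
    (by rw [dotProduct_comm, dotProduct_mulVec_eq_transpose, transpose_transpose] :
      Aᵀ *ᵥ q ⬝ᵥ x = A *ᵥ x ⬝ᵥ q),
    (by rw [dotProduct_mulVec_eq_transpose, dotProduct_mulVec_eq_transpose, hP.eq] :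
      x ⬝ᵥ P *ᵥ B *ᵥ K *ᵥ Bᵀ *ᵥ P *ᵥ x = Bᵀ *ᵥ P *ᵥ x ⬝ᵥ K *ᵥ Bᵀ *ᵥ P *ᵥ x),
    (by rw [dotProduct_mulVec_eq_transpose, dotProduct_mulVec_eq_transpose, hP.eq] :
      x ⬝ᵥ P *ᵥ B *ᵥ K *ᵥ Nᵀ *ᵥ x = Bᵀ *ᵥ P *ᵥ x ⬝ᵥ K *ᵥ Nᵀ *ᵥ x),
    (by rw [dotProduct_mulVec_eq_transpose] :
      x ⬝ᵥ N *ᵥ K *ᵥ Bᵀ *ᵥ P *ᵥ x = Nᵀ *ᵥ x ⬝ᵥ K *ᵥ Bᵀ *ᵥ P *ᵥ x),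
    (by rw [dotProduct_mulVec_eq_transpose] :
      x ⬝ᵥ N *ᵥ K *ᵥ Nᵀ *ᵥ x = Nᵀ *ᵥ x ⬝ᵥ K *ᵥ Nᵀ *ᵥ x),
    (by rw [dotProduct_comm, dotProduct_mulVec_eq_transpose, dotProduct_mulVec_eq_transpose,
        hP.eq] :
      P *ᵥ B *ᵥ K *ᵥ Bᵀ *ᵥ q ⬝ᵥ x = Bᵀ *ᵥ P *ᵥ x ⬝ᵥ K *ᵥ Bᵀ *ᵥ q),
    (by rw [dotProduct_comm, dotProduct_mulVec_eq_transpose, dotProduct_mulVec_eq_transpose,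
        hP.eq] :
      P *ᵥ B *ᵥ K *ᵥ au ⬝ᵥ x = Bᵀ *ᵥ P *ᵥ x ⬝ᵥ K *ᵥ au),
    (by rw [dotProduct_comm, dotProduct_mulVec_eq_transpose] :
      N *ᵥ K *ᵥ Bᵀ *ᵥ q ⬝ᵥ x = Nᵀ *ᵥ x ⬝ᵥ K *ᵥ Bᵀ *ᵥ q),
    (by rw [dotProduct_comm, dotProduct_mulVec_eq_transpose] :
      N *ᵥ K *ᵥ au ⬝ᵥ x = Nᵀ *ᵥ x ⬝ᵥ K *ᵥ au)]

end Riccati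

theorem stmt_16_general (n m : ℕ)
    (A : Matrix (Fin n) (Fin n) ℝ) (B : Matrix (Fin n) (Fin m) ℝ)
    (Nmat : Matrix (Fin n) (Fin m) ℝ)
    (Q Qf : Matrix (Fin n) (Fin n) ℝ)
    (R : Matrix (Fin m) (Fin m) ℝ) (hR : R.PosDef)
    (au : Fin m → ℝ) (ax b : Fin n → ℝ)
    (P : ℝ → Matrix (Fin n) (Fin n) ℝ) (q : ℝ → (Fin n → ℝ)) (c : ℝ → ℝ)
    (hPsymm : ∀ t, (P t).IsSymm)
    (hP : ∀ t > (0 : ℝ), ∀ k l : Fin n, HasDerivAt (fun τ => P τ k l)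
      ((-((P t)ᵀ * (B * R⁻¹ * Bᵀ) * P t) + (P t)ᵀ * (A - B * R⁻¹ * Nmatᵀ)
        + (A - B * R⁻¹ * Nmatᵀ)ᵀ * P t + (Q - Nmat * R⁻¹ * Nmatᵀ)) k l) t)
    (hq : ∀ t > (0 : ℝ), ∀ k : Fin n, HasDerivAt (fun τ => q τ k)
      ((-(((P t)ᵀ * (B * R⁻¹ * Bᵀ)) *ᵥ q t) + (A - B * R⁻¹ * Nmatᵀ)ᵀ *ᵥ q t
        - (ax - Nmat *ᵥ (R⁻¹ *ᵥ au)) + (P t)ᵀ *ᵥ (B *ᵥ (R⁻¹ *ᵥ au))) k) t)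
    (hc : ∀ t > (0 : ℝ), HasDerivAt c
      (-(1 / 2) * ((Bᵀ *ᵥ q t - au) ⬝ᵥ (R⁻¹ *ᵥ (Bᵀ *ᵥ q t - au)))) t)
    (hP0 : P 0 = Qf) (hq0 : q 0 = b) (hc0 : c 0 = 0)
    (S : EuclideanSpace ℝ (Fin n) → ℝ → ℝ)
    (hS : ∀ (x : EuclideanSpace ℝ (Fin n)) (t : ℝ),
      S x t = (1 / 2) * ((x : Fin n → ℝ) ⬝ᵥ (P t *ᵥ x)) + q t ⬝ᵥ x + c t)
    (H : (Fin n → ℝ) → (Fin n → ℝ) → ℝ)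
    (hH : ∀ x p, H x p = -((A *ᵥ x) ⬝ᵥ p) - (1 / 2) * (x ⬝ᵥ (Q *ᵥ x)) + ax ⬝ᵥ x
      + (1 / 2) * ((Bᵀ *ᵥ p + Nmatᵀ *ᵥ x - au)
          ⬝ᵥ (R⁻¹ *ᵥ (Bᵀ *ᵥ p + Nmatᵀ *ᵥ x - au)))) :
    ∀ (x : EuclideanSpace ℝ (Fin n)) (t : ℝ), 0 < t →
      HasGradientAt (fun y => S y t)
        (WithLp.toLp 2 (P t *ᵥ x + q t : Fin n → ℝ) : EuclideanSpace ℝ (Fin n)) x ∧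
      HasDerivAt (fun τ => S x τ) (-H (x : Fin n → ℝ) (P t *ᵥ x + q t)) t ∧
      S x 0 = (1 / 2) * ((x : Fin n → ℝ) ⬝ᵥ (Qf *ᵥ x)) + b ⬝ᵥ x := by
  intro x t ht
  have hK : (R⁻¹).IsSymm := (isHermitian_iff_isSymm.1 hR.isHermitian).inv
  refine ⟨?_, ?_, ?_⟩
  · simpa only [hS] using (hPsymm t).hasGradientAt_quadratic (q t) (c t) x
  · have hrate :=
      (((hasDerivAt_dotProduct_mulVec (hP t ht) x.ofLp x.ofLp).const_mul (1 / 2)).fun_add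
        (hasDerivAt_dotProduct_const (hq t ht) x.ofLp)).fun_add (hc t ht)
    rw [hH, ← riccati_rate_eq_neg_hamiltonian A B Nmat Q R⁻¹ hK au ax (P t) (hPsymm t)]
    simpa only [hS] using hrate
  · rw [hS, hP0, hq0, hc0, add_zero]

/-- Suppose `P`, `q`, `c` solve the Riccati ODE system (entrywise derivatives)
`P′ = -Pᵀ C_pp P + Pᵀ C_xp + C_xpᵀ P + C_xx`,
`q′ = -Pᵀ C_pp q + C_xpᵀ q - v_x + Pᵀ v_p`,
`c′(t) = -(1/2)⟨Bᵀ q(t) - a_u, R⁻¹(Bᵀ q(t) - a_u)⟩` for `t > 0`, with `P(0) = Q_f`,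
`q(0) = b`, `c(0) = 0`, where `C_pp = B R⁻¹ Bᵀ`, `C_xx = Q - N R⁻¹ Nᵀ`,
`C_xp = A - B R⁻¹ Nᵀ`, `v_x = a_x - N R⁻¹ a_u`, `v_p = B R⁻¹ a_u`, and `P(t)` is symmetric.
Define `S(x, t) = (1/2)⟨x, P(t)x⟩ + ⟨q(t), x⟩ + c(t)`. Then for every `x` and `t > 0`:
`∇ₓ S(x, t) = P(t)x + q(t)`, `∂S/∂t(x, t) + H(x, P(t)x + q(t)) = 0`, and
`S(x, 0) = (1/2)⟨x, Q_f x⟩ + ⟨b, x⟩`; i.e. `S` solves the HJ PDE `∂S/∂t + H(x, ∇ₓS) = 0`. -/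
theorem stmt_16 (n m : ℕ) (hn : 1 ≤ n) (hm : 1 ≤ m)
    (A : Matrix (Fin n) (Fin n) ℝ) (B : Matrix (Fin n) (Fin m) ℝ)
    (Nmat : Matrix (Fin n) (Fin m) ℝ)
    (Q Qf : Matrix (Fin n) (Fin n) ℝ) (hQ : Q.IsSymm) (hQf : Qf.IsSymm)
    (R : Matrix (Fin m) (Fin m) ℝ) (hR : R.PosDef)
    (au : Fin m → ℝ) (ax b : Fin n → ℝ)
    (P : ℝ → Matrix (Fin n) (Fin n) ℝ) (q : ℝ → (Fin n → ℝ)) (c : ℝ → ℝ)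
    (hPsymm : ∀ t, (P t).IsSymm)
    (hP : ∀ t > (0 : ℝ), ∀ k l : Fin n, HasDerivAt (fun τ => P τ k l)
      ((-((P t)ᵀ * (B * R⁻¹ * Bᵀ) * P t) + (P t)ᵀ * (A - B * R⁻¹ * Nmatᵀ)
        + (A - B * R⁻¹ * Nmatᵀ)ᵀ * P t + (Q - Nmat * R⁻¹ * Nmatᵀ)) k l) t)
    (hq : ∀ t > (0 : ℝ), ∀ k : Fin n, HasDerivAt (fun τ => q τ k)
      ((-(((P t)ᵀ * (B * R⁻¹ * Bᵀ)) *ᵥ q t) + (A - B * R⁻¹ * Nmatᵀ)ᵀ *ᵥ q t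
        - (ax - Nmat *ᵥ (R⁻¹ *ᵥ au)) + (P t)ᵀ *ᵥ (B *ᵥ (R⁻¹ *ᵥ au))) k) t)
    (hc : ∀ t > (0 : ℝ), HasDerivAt c
      (-(1 / 2) * ((Bᵀ *ᵥ q t - au) ⬝ᵥ (R⁻¹ *ᵥ (Bᵀ *ᵥ q t - au)))) t)
    (hP0 : P 0 = Qf) (hq0 : q 0 = b) (hc0 : c 0 = 0)
    (S : EuclideanSpace ℝ (Fin n) → ℝ → ℝ)
    (hS : ∀ (x : EuclideanSpace ℝ (Fin n)) (t : ℝ),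
      S x t = (1 / 2) * ((x : Fin n → ℝ) ⬝ᵥ (P t *ᵥ x)) + q t ⬝ᵥ x + c t)
    (H : (Fin n → ℝ) → (Fin n → ℝ) → ℝ)
    (hH : ∀ x p, H x p = -((A *ᵥ x) ⬝ᵥ p) - (1 / 2) * (x ⬝ᵥ (Q *ᵥ x)) + ax ⬝ᵥ x
      + (1 / 2) * ((Bᵀ *ᵥ p + Nmatᵀ *ᵥ x - au)
          ⬝ᵥ (R⁻¹ *ᵥ (Bᵀ *ᵥ p + Nmatᵀ *ᵥ x - au)))) :
    ∀ (x : EuclideanSpace ℝ (Fin n)) (t : ℝ), 0 < t →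
      HasGradientAt (fun y => S y t)
        (WithLp.toLp 2 (P t *ᵥ x + q t : Fin n → ℝ) : EuclideanSpace ℝ (Fin n)) x ∧
      HasDerivAt (fun τ => S x τ) (-H (x : Fin n → ℝ) (P t *ᵥ x + q t)) t ∧
      S x 0 = (1 / 2) * ((x : Fin n → ℝ) ⬝ᵥ (Qf *ᵥ x)) + b ⬝ᵥ x :=
  stmt_16_general n m A B Nmat Q Qf R hR au ax b P q c hPsymm hP hq hc hP0 hq0 hc0 S hS H hH
end
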